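/- arXiv:2508.00326 — 4 statements merged into one kernel-verified Lean document; each statement's English description precedes it below -/
import Mathlib

section
/- Let K ≥ 1, c : Fin K → Fin K → ℂ, σ : Fin K → ℝ with σ k > 0 for all k, and α : Fin K → ℝ with α k ≥ 0 for all k. For each k set J k = (Σ_m |c k m|²) + (σ k)², define e k (u) = 1 − 2·Re(conj(u)·(c k k)) + |u|²·(J k) for u ∈ ℂ, and define γ k = |c k k|²/((Σ_{m ≠ k} |c k m|²) + (σ k)²). Then the infimum over all u : Fin K → ℂ and all λ : Fin K → ℝ with λ k > 0 of Σ_k α k · (λ k · e k (u k) − log(λ k)) equals Σ_k α k · (1 − log(1 + γ k)), and this infimum is attained at u k = (c k k)/(J k) and λ k = (1 − |c k k|²/(J k))⁻¹. (log denotes the natural logarithm.) -/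
/-- For fixed effective gains `c`, minimizing the weighted-MSE objective
`Σ_k α k (λ k e k (u k) − log(λ k))` over receive filters `u` and positive weights `λ`
yields `Σ_k α k (1 − log(1 + γ k))`, attained at `u k = c k k / J k` and
`λ k = (1 − |c k k|²/J k)⁻¹`. -/
theorem stmt_3 (K : ℕ) (hK : 1 ≤ K) (c : Fin K → Fin K → ℂ) (σ α : Fin K → ℝ)
    (hσ : ∀ k, 0 < σ k) (hα : ∀ k, 0 ≤ α k)
    (J : Fin K → ℝ)
    (hJ : ∀ k, J k = (∑ m, ‖c k m‖ ^ 2) + (σ k) ^ 2)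
    (e : Fin K → ℂ → ℝ)
    (he : ∀ k (u : ℂ), e k u = 1 - 2 * ((starRingEnd ℂ) u * c k k).re
        + ‖u‖ ^ 2 * J k)
    (γ : Fin K → ℝ)
    (hγ : ∀ k, γ k = ‖c k k‖ ^ 2 /
        ((∑ m ∈ Finset.univ.erase k, ‖c k m‖ ^ 2) + (σ k) ^ 2)) :
    (∀ (u : Fin K → ℂ) (l : Fin K → ℝ), (∀ k, 0 < l k) →
        (∑ k, α k * (1 - Real.log (1 + γ k)))
          ≤ ∑ k, α k * (l k * e k (u k) - Real.log (l k))) ∧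
    (∀ k, 0 < (1 - ‖c k k‖ ^ 2 / J k)⁻¹) ∧
    (∑ k, α k * ((1 - ‖c k k‖ ^ 2 / J k)⁻¹ * e k (c k k / (J k : ℂ))
        - Real.log ((1 - ‖c k k‖ ^ 2 / J k)⁻¹)))
      = ∑ k, α k * (1 - Real.log (1 + γ k)) := by
  -- abbreviations
  set A : Fin K → ℝ := fun k =>
    (∑ m ∈ Finset.univ.erase k, ‖c k m‖ ^ 2) + (σ k) ^ 2 with hA
  have hApos : ∀ k, 0 < A k := by
    intro k
    have hs : 0 ≤ ∑ m ∈ Finset.univ.erase k, ‖c k m‖ ^ 2 :=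
      Finset.sum_nonneg fun m _ => by positivity
    have := hσ k
    simp only [hA]
    nlinarith
  have hJA : ∀ k, J k = A k + ‖c k k‖ ^ 2 := by
    intro k
    rw [hJ k]
    have hsplit : (∑ m, ‖c k m‖ ^ 2)
        = ‖c k k‖ ^ 2 + ∑ m ∈ Finset.univ.erase k, ‖c k m‖ ^ 2 :=
      (Finset.add_sum_erase _ _ (Finset.mem_univ k)).symm
    rw [hsplit]; simp only [hA]; ring
  have hJpos : ∀ k, 0 < J k := by
    intro k
    rw [hJA k]
    have := hApos k
    positivity
  have heminA : ∀ k, 1 - ‖c k k‖ ^ 2 / J k = A k / J k := by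
    intro k
    field_simp [(hJpos k).ne']
    linarith [hJA k]
  have heminpos : ∀ k, 0 < 1 - ‖c k k‖ ^ 2 / J k := by
    intro k
    rw [heminA k]
    exact div_pos (hApos k) (hJpos k)
  have hγA : ∀ k, 1 + γ k = (1 - ‖c k k‖ ^ 2 / J k)⁻¹ := by
    intro k
    have h1 : (0:ℝ) < (∑ m ∈ Finset.univ.erase k, ‖c k m‖ ^ 2) + σ k ^ 2 := by
      have := hApos k; simpa [hA] using this
    rw [heminA k, hγ k, inv_div, hJA k, one_add_div h1.ne']
  -- value of e at the optimal filter
  have heval : ∀ k, e k (c k k / (J k : ℂ)) = 1 - ‖c k k‖ ^ 2 / J k := by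
    intro k
    rw [he k]
    have hre : ((starRingEnd ℂ) (c k k / (J k : ℂ)) * c k k).re
        = ‖c k k‖ ^ 2 / J k := by
      rw [map_div₀, Complex.conj_ofReal, div_mul_eq_mul_div]
      rw [show (starRingEnd ℂ) (c k k) * c k k = ((‖c k k‖ ^ 2 : ℝ) : ℂ) by
        rw [Complex.sq_norm, Complex.ofReal_def]
        exact_mod_cast (Complex.normSq_eq_conj_mul_self (z := c k k)).symm]
      rw [← Complex.ofReal_div]
      exact Complex.ofReal_re _
    have habs : ‖c k k / (J k : ℂ)‖ ^ 2
        = ‖c k k‖ ^ 2 / J k ^ 2 := by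
      rw [norm_div, Complex.norm_real, Real.norm_eq_abs, abs_of_pos (hJpos k)]
      ring
    rw [hre, habs]
    have := (hJpos k).ne'
    field_simp
    ring
  -- per-user lower bound
  have hkey : ∀ k (u : ℂ) (l : ℝ), 0 < l →
      1 - Real.log (1 + γ k) ≤ l * e k u - Real.log l := by
    intro k u l hl
    have hemin : 1 - ‖c k k‖ ^ 2 / J k ≤ e k u := by
      rw [he k]
      have hJp := hJpos k
      have hreb : ((starRingEnd ℂ) u * c k k).re ≤ ‖u‖ * ‖c k k‖ := by
        calc ((starRingEnd ℂ) u * c k k).re ≤ ‖(starRingEnd ℂ) u * c k k‖ :=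
              Complex.re_le_norm _
          _ = ‖u‖ * ‖c k k‖ := by rw [norm_mul, Complex.norm_conj]
      have habsu : 0 ≤ ‖u‖ := norm_nonneg u
      have habsc : 0 ≤ ‖c k k‖ := norm_nonneg _
      have hsq : 0 ≤ (‖u‖ * J k - ‖c k k‖) ^ 2 := sq_nonneg _
      have hdiv : ‖c k k‖ ^ 2 / J k * J k = ‖c k k‖ ^ 2 :=
        div_mul_cancel₀ _ hJp.ne'
      nlinarith [hdiv, hsq, mul_le_mul_of_nonneg_right hreb hJp.le, hJp]
    have hep := heminpos k
    have hlog : Real.log (l * (1 - ‖c k k‖ ^ 2 / J k))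
        ≤ l * (1 - ‖c k k‖ ^ 2 / J k) - 1 :=
      Real.log_le_sub_one_of_pos (by positivity)
    rw [Real.log_mul hl.ne' hep.ne'] at hlog
    have hloginv : Real.log (1 + γ k) = - Real.log (1 - ‖c k k‖ ^ 2 / J k) := by
      rw [hγA k, Real.log_inv]
    rw [hloginv]
    have hmul : l * (1 - ‖c k k‖ ^ 2 / J k) ≤ l * e k u :=
      mul_le_mul_of_nonneg_left hemin hl.le
    linarith
  refine ⟨?_, fun k => inv_pos.mpr (heminpos k), ?_⟩
  · intro u l hl
    apply Finset.sum_le_sum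
    intro k _
    exact mul_le_mul_of_nonneg_left (hkey k (u k) (l k) (hl k)) (hα k)
  · apply Finset.sum_congr rfl
    intro k _
    congr 1
    rw [heval k, inv_mul_cancel₀ (heminpos k).ne', Real.log_inv, hγA k, Real.log_inv]
end

section
/- Let K ≥ 1, σ : Fin K → ℝ with σ k > 0, and α : Fin K → ℝ with α k ≥ 0. For c : Fin K → Fin K → ℂ define J k (c) = (Σ_m |c k m|²) + (σ k)², e k (c, u) = 1 − 2·Re(conj(u)·(c k k)) + |u|²·(J k (c)), γ k (c) = |c k k|²/((Σ_{m ≠ k} |c k m|²) + (σ k)²), the weighted sum rate W(c) = Σ_k α k · log(1 + γ k (c)), and Φ(c) = infimum over u : Fin K → ℂ and λ : Fin K → ℝ, λ k > 0, of Σ_k α k · (λ k · e k (c, u k) − log(λ k)). Then for every c, Φ(c) = (Σ_k α k) − W(c); consequently, for any nonempty set S of functions Fin K → Fin K → ℂ, an element c* ∈ S maximizes W over S if and only if c* minimizes Φ over S. -/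
/-- Pointwise lower bound for the per-user WMMSE objective. -/
lemma wmmse_aux (Jr D : ℝ) (cd : ℂ) (hD : 0 < D) (hJ : Jr = ‖cd‖ ^ 2 + D)
    (u : ℂ) (l : ℝ) (hl : 0 < l) :
    1 - Real.log (Jr / D)
      ≤ l * (1 - 2 * ((starRingEnd ℂ) u * cd).re + ‖u‖ ^ 2 * Jr) - Real.log l := by
  have hJpos : 0 < Jr := by rw [hJ]; positivity
  set E := 1 - 2 * ((starRingEnd ℂ) u * cd).re + ‖u‖ ^ 2 * Jr with hE
  have hEge : D / Jr ≤ E := by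
    rw [div_le_iff₀ hJpos]
    have h1 : ‖cd‖ ^ 2 = cd.re * cd.re + cd.im * cd.im := by
      rw [Complex.sq_norm, Complex.normSq_apply]
    have h2 : ‖u‖ ^ 2 = u.re * u.re + u.im * u.im := by
      rw [Complex.sq_norm, Complex.normSq_apply]
    have h3 : ((starRingEnd ℂ) u * cd).re = u.re * cd.re + u.im * cd.im := by
      simp [Complex.mul_re]
    have key : 0 ≤ (Jr * u.re - cd.re) ^ 2 + (Jr * u.im - cd.im) ^ 2 := by positivity
    simp only [hE]
    rw [h1] at hJ
    rw [h2, h3]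
    nlinarith [key]
  have hDJ : 0 < D / Jr := by positivity
  have hlog : Real.log (l * (D / Jr)) ≤ l * (D / Jr) - 1 :=
    Real.log_le_sub_one_of_pos (by positivity)
  rw [Real.log_mul (ne_of_gt hl) (ne_of_gt hDJ)] at hlog
  have hld : Real.log (Jr / D) = - Real.log (D / Jr) := by
    rw [Real.log_div (ne_of_gt hJpos) (ne_of_gt hD),
        Real.log_div (ne_of_gt hD) (ne_of_gt hJpos)]; ring
  have hEpos : 0 < E := lt_of_lt_of_le hDJ hEge
  have : l * (D / Jr) ≤ l * E := by
    exact mul_le_mul_of_nonneg_left hEge (le_of_lt hl)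
  rw [hld]; linarith

/-- Lemma 1, WMMSE equivalence: `Φ(c) = (Σ_k α k) − W(c)` for every effective
gain matrix `c`, and consequently over any nonempty feasible set `S`, `c*` maximizes the
weighted sum rate `W` iff `c*` minimizes the WMMSE value `Φ`. -/
theorem stmt_4 (K : ℕ) (hK : 1 ≤ K) (σ α : Fin K → ℝ)
    (hσ : ∀ k, 0 < σ k) (hα : ∀ k, 0 ≤ α k)
    (J : (Fin K → Fin K → ℂ) → Fin K → ℝ)
    (hJ : ∀ c k, J c k = (∑ m, ‖c k m‖ ^ 2) + (σ k) ^ 2)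
    (e : (Fin K → Fin K → ℂ) → Fin K → ℂ → ℝ)
    (he : ∀ c k (u : ℂ), e c k u = 1 - 2 * ((starRingEnd ℂ) u * c k k).re
        + ‖u‖ ^ 2 * J c k)
    (γ : (Fin K → Fin K → ℂ) → Fin K → ℝ)
    (hγ : ∀ c k, γ c k = ‖c k k‖ ^ 2 /
        ((∑ m ∈ Finset.univ.erase k, ‖c k m‖ ^ 2) + (σ k) ^ 2))
    (W : (Fin K → Fin K → ℂ) → ℝ)
    (hW : ∀ c, W c = ∑ k, α k * Real.log (1 + γ c k))
    (Φ : (Fin K → Fin K → ℂ) → ℝ)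
    (hΦ : ∀ c, Φ c = sInf {x : ℝ | ∃ (u : Fin K → ℂ) (l : Fin K → ℝ),
        (∀ k, 0 < l k) ∧ x = ∑ k, α k * (l k * e c k (u k) - Real.log (l k))}) :
    (∀ c, Φ c = (∑ k, α k) - W c) ∧
    (∀ S : Set (Fin K → Fin K → ℂ), S.Nonempty → ∀ c' ∈ S,
        ((∀ c ∈ S, W c ≤ W c') ↔ (∀ c ∈ S, Φ c' ≤ Φ c))) := by
  have main : ∀ c, Φ c = (∑ k, α k) - W c := by
    intro c
    set D : Fin K → ℝ := fun k =>
      (∑ m ∈ Finset.univ.erase k, ‖c k m‖ ^ 2) + (σ k) ^ 2 with hDdef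
    have hDpos : ∀ k, 0 < D k := by
      intro k
      have : 0 ≤ ∑ m ∈ Finset.univ.erase k, ‖c k m‖ ^ 2 :=
        Finset.sum_nonneg fun m _ => by positivity
      have := hσ k; simp only [hDdef]; nlinarith
    have hJD : ∀ k, J c k = ‖c k k‖ ^ 2 + D k := by
      intro k
      have h : (∑ x ∈ Finset.univ.erase k, ‖c k x‖ ^ 2)
          + ‖c k k‖ ^ 2 = ∑ m, ‖c k m‖ ^ 2 :=
        Finset.sum_erase_add _ _ (Finset.mem_univ k)
      rw [hJ]
      show _ = ‖c k k‖ ^ 2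
        + ((∑ m ∈ Finset.univ.erase k, ‖c k m‖ ^ 2) + (σ k) ^ 2)
      linarith
    have hJpos : ∀ k, 0 < J c k := by
      intro k; rw [hJD]; have := hDpos k; positivity
    have hγJD : ∀ k, 1 + γ c k = J c k / D k := by
      intro k
      rw [hγ c k, hJD k]
      have hDk := hDpos k
      show 1 + ‖c k k‖ ^ 2 / D k = _ / D k
      field_simp
      ring
    -- the candidate minimizer
    set v : ℝ := ∑ k, α k * (1 - Real.log (J c k / D k)) with hv
    have hveq : v = (∑ k, α k) - W c := by
      rw [hv, hW, ← Finset.sum_sub_distrib]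
      apply Finset.sum_congr rfl
      intro k _
      rw [hγJD k]; ring
    -- membership : v is attained
    have hmem : v ∈ {x : ℝ | ∃ (u : Fin K → ℂ) (l : Fin K → ℝ),
        (∀ k, 0 < l k) ∧ x = ∑ k, α k * (l k * e c k (u k) - Real.log (l k))} := by
      refine ⟨fun k => c k k / (J c k : ℂ), fun k => J c k / D k, fun k => by
        have := hJpos k; have := hDpos k; positivity, ?_⟩
      rw [hv]
      apply Finset.sum_congr rfl
      intro k _
      congr 1
      have hJk := hJpos k
      have hDk := hDpos k
      have heval : e c k (c k k / (J c k : ℂ)) = D k / J c k := by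
        rw [he]
        have h3 : ((starRingEnd ℂ) (c k k / (J c k : ℂ)) * c k k).re
            = ‖c k k‖ ^ 2 / J c k := by
          rw [map_div₀, Complex.conj_ofReal, div_mul_eq_mul_div]
          rw [Complex.div_ofReal_re, ← Complex.normSq_eq_conj_mul_self]
          rw [Complex.sq_norm]
          simp
        have h4 : ‖c k k / (J c k : ℂ)‖ ^ 2
            = ‖c k k‖ ^ 2 / (J c k) ^ 2 := by
          rw [norm_div, div_pow, Complex.norm_real, Real.norm_eq_abs, abs_of_pos hJk]
        rw [h3, h4, hJD k]
        field_simp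
        ring
      rw [heval]
      have : J c k / D k * (D k / J c k) = 1 := by field_simp
      rw [this]
    -- lower bound
    have hlb : ∀ x ∈ {x : ℝ | ∃ (u : Fin K → ℂ) (l : Fin K → ℝ),
        (∀ k, 0 < l k) ∧ x = ∑ k, α k * (l k * e c k (u k) - Real.log (l k))}, v ≤ x := by
      rintro x ⟨u, l, hl, rfl⟩
      rw [hv]
      apply Finset.sum_le_sum
      intro k _
      apply mul_le_mul_of_nonneg_left _ (hα k)
      rw [he]
      exact wmmse_aux (J c k) (D k) (c k k) (hDpos k) (hJD k) (u k) (l k) (hl k)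
    rw [hΦ, ← hveq]
    exact le_antisymm (csInf_le ⟨v, hlb⟩ hmem) (le_csInf ⟨v, hmem⟩ hlb)
  refine ⟨main, ?_⟩
  intro S _ c' _
  constructor
  · intro h c hc
    rw [main c, main c']
    linarith [h c hc]
  · intro h c hc
    have := h c hc
    rw [main c, main c'] at this
    linarith
end

section
/- Let n ≥ 1 and let D' ∈ ℂ^{n×n} be Hermitian and positive definite. Let p, q ∈ ℂ^n with q ≠ p, and suppose Re(star(q) ⬝ D' p) ≥ Re(star(p) ⬝ D' p). Then Re(star(q) ⬝ D' q) > Re(star(p) ⬝ D' p). -/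
open Matrix
open scoped ComplexOrder

/-- strict ascent of the power iteration: if `D'` is Hermitian positive
definite, `q ≠ p`, and `Re(q^H D' p) ≥ Re(p^H D' p)`, then `Re(q^H D' q) > Re(p^H D' p)`. -/
theorem stmt_8 (n : ℕ) (hn : 1 ≤ n) (D' : Matrix (Fin n) (Fin n) ℂ)
    (hHerm : D'.IsHermitian) (hPD : D'.PosDef)
    (p q : Fin n → ℂ) (hne : q ≠ p)
    (h : (star p ⬝ᵥ D'.mulVec p).re ≤ (star q ⬝ᵥ D'.mulVec p).re) :
    (star p ⬝ᵥ D'.mulVec p).re < (star q ⬝ᵥ D'.mulVec q).re := by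
  have hsym : (star p ⬝ᵥ D'.mulVec q).re = (star q ⬝ᵥ D'.mulVec p).re := by
    have key : star p ⬝ᵥ D'.mulVec q = star (star q ⬝ᵥ D'.mulVec p) := by
      simp only [dotProduct, mulVec, Pi.star_apply, Finset.mul_sum, star_sum, star_mul']
      rw [Finset.sum_comm]
      refine Finset.sum_congr rfl fun i _ => Finset.sum_congr rfl fun j _ => ?_
      rw [star_star, ← hHerm.apply]
      ring
    rw [key, Complex.star_def, Complex.conj_re]
  have hpos : 0 < (star (q - p) ⬝ᵥ D'.mulVec (q - p)).re := by
    have := hPD.dotProduct_mulVec_pos (x := q - p) (sub_ne_zero.mpr hne)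
    exact ((Complex.lt_def).mp this).1
  have hexp : (star (q - p) ⬝ᵥ D'.mulVec (q - p)) =
      star q ⬝ᵥ D'.mulVec q - star q ⬝ᵥ D'.mulVec p - star p ⬝ᵥ D'.mulVec q
        + star p ⬝ᵥ D'.mulVec p := by
    simp [star_sub, mulVec_sub, sub_dotProduct, dotProduct_sub]
    ring
  rw [hexp] at hpos
  simp only [Complex.add_re, Complex.sub_re] at hpos
  linarith [hsym ▸ hpos]
end

section
/- Let n ≥ 1 and let D' ∈ ℂ^{n×n} be Hermitian and positive semidefinite. Let p : ℕ → (Fin n → ℂ) be a sequence such that |p(q)_i| = 1 for all q and all i, and such that for every q, Re(star(p(q+1)) ⬝ (D' · p(q))) = Σ_i |(D' · p(q))_i| (i.e., each iterate maximizes the linear form Re(x^H D' p(q)) over unit-modulus x). Define v(q) = Re(star(p(q)) ⬝ (D' · p(q))). Then v is monotone nondecreasing, v(q) ≤ Σ_m Σ_k |D'_{m,k}| for all q, and the sequence v converges. -/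
open Matrix
open scoped ComplexOrder

private lemma herm_swap {n : ℕ} {D' : Matrix (Fin n) (Fin n) ℂ}
    (hHerm : D'.IsHermitian) (x y : Fin n → ℂ) :
    (star y ⬝ᵥ D'.mulVec x) = star (star x ⬝ᵥ D'.mulVec y) := by
  rw [star_dotProduct, star_mulVec, dotProduct_mulVec, hHerm.eq]

private lemma re_cross_le {n : ℕ} {D' : Matrix (Fin n) (Fin n) ℂ}
    (hHerm : D'.IsHermitian) (hPSD : D'.PosSemidef) (x y : Fin n → ℂ) :
    2 * (star x ⬝ᵥ D'.mulVec y).re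
      ≤ (star x ⬝ᵥ D'.mulVec x).re + (star y ⬝ᵥ D'.mulVec y).re := by
  have h0 : 0 ≤ (star (x - y) ⬝ᵥ D'.mulVec (x - y)).re :=
    hPSD.re_dotProduct_nonneg (x - y)
  have hexp : star (x - y) ⬝ᵥ D'.mulVec (x - y)
      = star x ⬝ᵥ D'.mulVec x - star x ⬝ᵥ D'.mulVec y
        - star y ⬝ᵥ D'.mulVec x + star y ⬝ᵥ D'.mulVec y := by
    simp [star_sub, mulVec_sub, sub_dotProduct, dotProduct_sub]
    ring
  rw [hexp] at h0
  have hsym : (star y ⬝ᵥ D'.mulVec x).re = (star x ⬝ᵥ D'.mulVec y).re := by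
    rw [herm_swap hHerm x y, Complex.star_def, Complex.conj_re]
  simp only [Complex.add_re, Complex.sub_re] at h0
  linarith

private lemma re_le_abs_sum {n : ℕ} (x w : Fin n → ℂ) (hx : ∀ i, ‖x i‖ = 1) :
    (star x ⬝ᵥ w).re ≤ ∑ i, ‖w i‖ := by
  calc (star x ⬝ᵥ w).re ≤ ‖star x ⬝ᵥ w‖ := Complex.re_le_norm _
    _ ≤ ∑ i, ‖star (x i) * w i‖ := by
        unfold dotProduct
        exact norm_sum_le _ _
    _ = ∑ i, ‖w i‖ := by
        refine Finset.sum_congr rfl fun i _ => ?_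
        rw [norm_mul]; simp [hx i]

/-- convergence claim of Lemma 2: for Hermitian positive semidefinite `D'`
and a power-iteration sequence of unit-modulus vectors (each iterate maximizing the linear
form, i.e. `Re(p(q+1)^H D' p(q)) = Σ_i |(D' p(q))_i|`), the objective values
`v(q) = Re(p(q)^H D' p(q))` are nondecreasing, bounded by `Σ_m Σ_k |D'_{m,k}|`, and
convergent. -/
theorem stmt_10 (n : ℕ) (hn : 1 ≤ n) (D' : Matrix (Fin n) (Fin n) ℂ)
    (hHerm : D'.IsHermitian) (hPSD : D'.PosSemidef)
    (p : ℕ → Fin n → ℂ) (hp : ∀ q i, ‖p q i‖ = 1)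
    (hstep : ∀ q, (star (p (q + 1)) ⬝ᵥ D'.mulVec (p q)).re
        = ∑ i, ‖D'.mulVec (p q) i‖)
    (v : ℕ → ℝ) (hv : ∀ q, v q = (star (p q) ⬝ᵥ D'.mulVec (p q)).re) :
    Monotone v ∧ (∀ q, v q ≤ ∑ m, ∑ k, ‖D' m k‖) ∧
      ∃ L : ℝ, Filter.Tendsto v Filter.atTop (nhds L) := by
  have habs : ∀ q, (star (p q) ⬝ᵥ D'.mulVec (p q)).re
      ≤ ∑ i, ‖D'.mulVec (p q) i‖ :=
    fun q => re_le_abs_sum (p q) _ (hp q)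
  have hmono : Monotone v := by
    apply monotone_nat_of_le_succ
    intro q
    have h1 : v q ≤ (star (p (q + 1)) ⬝ᵥ D'.mulVec (p q)).re := by
      rw [hv, hstep]; exact habs q
    have h2 := re_cross_le hHerm hPSD (p (q + 1)) (p q)
    rw [hv q, hv (q + 1)]
    rw [hv q] at h1
    linarith [h1, h2]
  have hbd : ∀ q, v q ≤ ∑ m, ∑ k, ‖D' m k‖ := by
    intro q
    rw [hv]
    refine (habs q).trans ?_
    refine Finset.sum_le_sum fun i _ => ?_
    calc ‖D'.mulVec (p q) i‖
        ≤ ∑ k, ‖D' i k * p q k‖ := by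
          unfold mulVec dotProduct
          exact norm_sum_le _ _
      _ = ∑ k, ‖D' i k‖ := by
          refine Finset.sum_congr rfl fun k _ => ?_
          rw [norm_mul, hp q k, mul_one]
  refine ⟨hmono, hbd, ?_⟩
  obtain ⟨L, hL⟩ := tendsto_of_monotone hmono |>.resolve_left (by
    intro h
    obtain ⟨q, hq⟩ := (h.eventually (Filter.eventually_gt_atTop
      (∑ m, ∑ k, ‖D' m k‖))).exists
    exact absurd (hbd q) (not_le.mpr hq))
  exact ⟨L, hL⟩
end
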